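/- arXiv:1706.09207 — 3 statements merged into one kernel-verified Lean document; each statement's English description precedes it below -/
import Mathlib

section
/- Let c ∈ ℤ², c ≠ 0, and let a = (1,0), A = T_a. If T_c = A^k for some integer k, then c is an integer multiple of a, i.e., c = (m, 0) for some m ∈ ℤ, and k = m², since T_{(m,0)} = A^{m²}. -/
open Matrix

def omegaForm (u v : Fin 2 → ℤ) : ℤ := u 0 * v 1 - u 1 * v 0

def Tfun (c x : Fin 2 → ℤ) : Fin 2 → ℤ := x + omegaForm c x • c

def Tmat (c : Fin 2 → ℤ) : Matrix (Fin 2) (Fin 2) ℤ :=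
  !![1 - c 0 * c 1, c 0 * c 0; -(c 1 * c 1), 1 + c 0 * c 1]

theorem Tmat_det (c : Fin 2 → ℤ) : (Tmat c).det = 1 := by
  simp [Tmat, Matrix.det_fin_two_of]; ring

def Tsl (c : Fin 2 → ℤ) : Matrix.SpecialLinearGroup (Fin 2) ℤ := ⟨Tmat c, Tmat_det c⟩

lemma Apow (k : ℤ) :
    ((Tsl ![1, 0] ^ k : Matrix.SpecialLinearGroup (Fin 2) ℤ) : Matrix (Fin 2) (Fin 2) ℤ)
      = !![1, k; 0, 1] := by
  have hA : ((Tsl ![1, 0] : Matrix.SpecialLinearGroup (Fin 2) ℤ) : Matrix (Fin 2) (Fin 2) ℤ)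
      = !![1, 1; 0, 1] := by
    simp [Tsl, Tmat]
  induction k using Int.induction_on with
  | zero => simp [Matrix.one_fin_two]
  | succ n ih =>
      rw [_root_.zpow_add_one, Matrix.SpecialLinearGroup.coe_mul, ih, hA]
      ext i j
      fin_cases i <;> fin_cases j <;> simp [Matrix.mul_apply, Fin.sum_univ_two] <;> ring
  | pred n ih =>
      rw [sub_eq_add_neg, _root_.zpow_add, Matrix.SpecialLinearGroup.coe_mul, ih]
      have : ((Tsl ![1, 0] ^ (-1 : ℤ) : Matrix.SpecialLinearGroup (Fin 2) ℤ) :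
          Matrix (Fin 2) (Fin 2) ℤ) = !![1, -1; 0, 1] := by
        have h1 : (Tsl ![1, 0]) * (show Matrix.SpecialLinearGroup (Fin 2) ℤ from ⟨!![1, -1; 0, 1], by simp [Matrix.det_fin_two_of]⟩) = 1 := by
          ext i j
          rw [Matrix.SpecialLinearGroup.coe_mul]
          fin_cases i <;> fin_cases j <;>
            simp [Tsl, Tmat, Matrix.mul_apply, Fin.sum_univ_two]
        have : (Tsl ![1, 0])⁻¹ =
            (⟨!![1, -1; 0, 1], by simp [Matrix.det_fin_two_of]⟩ :
              Matrix.SpecialLinearGroup (Fin 2) ℤ) := by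
          exact inv_eq_of_mul_eq_one_right h1
        rw [_root_.zpow_neg_one, this]
      rw [this]
      ext i j
      fin_cases i <;> fin_cases j <;> simp [Matrix.mul_apply, Fin.sum_univ_two] <;> ring

theorem stmt8 (c : Fin 2 → ℤ) (hc : c ≠ 0) (k : ℤ)
    (h : Tsl c = Tsl ![1, 0] ^ k) :
    ∃ m : ℤ, c = m • (![1, 0] : Fin 2 → ℤ) ∧ k = m ^ 2 := by
  have hmat : (Tmat c : Matrix (Fin 2) (Fin 2) ℤ) = !![1, k; 0, 1] := by
    rw [← Apow k, ← h]; rfl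
  have h10 : -(c 1 * c 1) = 0 := by
    have := congrFun (congrFun hmat 1) 0
    simpa [Tmat] using this
  have hc1 : c 1 = 0 := by nlinarith [sq_nonneg (c 1)]
  have h01 : c 0 * c 0 = k := by
    have := congrFun (congrFun hmat 0) 1
    simpa [Tmat] using this
  refine ⟨c 0, ?_, by rw [← h01]; ring⟩
  funext i
  fin_cases i <;> simp [hc1]
end

section
/- Let a = (1,0) ∈ ℤ² and A = T_a. Suppose b₁, b₂ ∈ ℤ² are primitive, neither equal to ±a, and T_{b₂} ∘ T_{b₁} = ε·A^k for some integer k and sign ε ∈ {+1,-1}. Then ε = -1, k = -4, ω(a,b₂) = ±1, and b₁ = ±(b₂ + 2·ω(a,b₂)·a). -/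
open Matrix

/-!
Write `b₁ = (p, q)`, `b₂ = (r, s)` and `d = ω(b₂, b₁)`. Since `T_c - 1` is the rank-one map
`x ↦ ω(c, x) c`, the trace of `T_{b₂} T_{b₁}` is `2 - d²`; comparing with `tr (ε Aᵏ) = 2ε`
gives `d² = 2 - 2ε`, and the vanishing lower-left entry gives `s² + d s q + q² = 0`.
For `ε = 1` this forces `q = s = 0`, so `b₁ = ±a`. For `ε = -1` we have `d = 2e` with `e = ±1`,
the quadratic becomes `(s + e q)² = 0`, and `d = 2e` becomes `s (e r + p) = -2e`; so `s ∣ 2`,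
and a parity argument using primitivity of both `b₁` and `b₂` excludes `s = ±2`. The
upper-right entry then reads `-k = 4 s² = 4`.
-/
lemma Tsl_one_zero : Tsl ![1, 0] = ModularGroup.T := by
  ext i j
  fin_cases i <;> fin_cases j <;> rfl

lemma trace_Tmat_mul (b c : Fin 2 → ℤ) :
    (Tmat c * Tmat b).trace = 2 - omegaForm c b ^ 2 := by
  simp [trace_fin_two, Tmat, omegaForm]
  ring

lemma Tmat_mul_apply_zero_one (b c : Fin 2 → ℤ) :
    (Tmat c * Tmat b) 0 1 = c 0 ^ 2 + omegaForm c b * c 0 * b 0 + b 0 ^ 2 := by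
  simp [Tmat, omegaForm]
  ring

lemma Tmat_mul_apply_one_zero (b c : Fin 2 → ℤ) :
    (Tmat c * Tmat b) 1 0 = -(c 1 ^ 2 + omegaForm c b * c 1 * b 1 + b 1 ^ 2) := by
  simp [Tmat, omegaForm]
  ring

lemma relations_of_Tmat_mul_eq_smul {b c : Fin 2 → ℤ} {ε k : ℤ}
    (h : Tmat c * Tmat b = ε • !![1, k; 0, 1]) :
    omegaForm c b ^ 2 = 2 - 2 * ε ∧
      c 0 ^ 2 + omegaForm c b * c 0 * b 0 + b 0 ^ 2 = ε * k ∧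
      c 1 ^ 2 + omegaForm c b * c 1 * b 1 + b 1 ^ 2 = 0 := by
  have htr := congrArg trace h
  have h01 := congrFun₂ h 0 1
  have h10 := congrFun₂ h 1 0
  rw [trace_Tmat_mul] at htr
  rw [Tmat_mul_apply_zero_one] at h01
  rw [Tmat_mul_apply_one_zero, neg_eq_iff_eq_neg] at h10
  simp [trace_fin_two] at htr h01 h10
  exact ⟨by linear_combination -htr, h01, h10⟩

lemma eq_or_eq_neg_of_isCoprime_of_apply_one_eq_zero {b : Fin 2 → ℤ}
    (hb : IsCoprime (b 0) (b 1)) (h : b 1 = 0) : b = ![1, 0] ∨ b = -![1, 0] := by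
  rw [h, isCoprime_zero_right, Int.isUnit_iff] at hb
  rcases hb with h0 | h0
  · left; ext i; fin_cases i <;> simp [h0, h]
  · right; ext i; fin_cases i <;> simp [h0, h]

lemma eq_neg_mul_of_sq_add_two_mul_add_sq_eq_zero {e s q : ℤ} (he : e ^ 2 = 1)
    (h : s ^ 2 + 2 * e * s * q + q ^ 2 = 0) : q = -(e * s) := by
  have hsq : (q + e * s) ^ 2 = 0 := by linear_combination h + s ^ 2 * he
  linear_combination pow_eq_zero_iff two_ne_zero |>.mp hsq

lemma isUnit_of_isCoprime_of_mul_eq {p q r s e : ℤ} (hpq : IsCoprime p q)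
    (hrs : IsCoprime r s) (he : IsUnit e) (hq : q = -(e * s))
    (h : s * (e * r + p) = -(2 * e)) : IsUnit s := by
  -- an even `s` makes `q` even, hence `p` and `r` odd, hence `4 ∣ s (e r + p) = -2e`
  have hodd : ¬ 2 ∣ s := by
    intro h2s
    have h2q : (2 : ℤ) ∣ q := hq ▸ (h2s.mul_left e).neg_right
    have hp : ¬ (2 : ℤ) ∣ p := fun h2p => Int.prime_two.not_isUnit (hpq.isUnit_of_dvd' h2p h2q)
    have hr : ¬ (2 : ℤ) ∣ r := fun h2r => Int.prime_two.not_isUnit (hrs.isUnit_of_dvd' h2r h2s)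
    have h4 : 2 * 2 ∣ s * (e * r + p) :=
      mul_dvd_mul h2s (by rcases Int.isUnit_iff.1 he with rfl | rfl <;> omega)
    rw [h] at h4
    rcases Int.isUnit_iff.1 he with rfl | rfl <;> omega
  have hdvd : s ∣ 2 :=
    ⟨-(e * (e * r + p)), by linear_combination e * h - 2 * Int.isUnit_sq he⟩
  exact (Int.prime_two.irreducible.coprime_iff_not_dvd.2 hodd).symm.isUnit_of_dvd hdvd

lemma eq_neg_smul_of_omegaForm_eq_two_mul {b₁ b₂ : Fin 2 → ℤ}
    (h1 : IsCoprime (b₁ 0) (b₁ 1)) (h2 : IsCoprime (b₂ 0) (b₂ 1)) {e : ℤ} (he : IsUnit e)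
    (hd : omegaForm b₂ b₁ = 2 * e)
    (hQ : b₂ 1 ^ 2 + omegaForm b₂ b₁ * b₂ 1 * b₁ 1 + b₁ 1 ^ 2 = 0) :
    IsUnit (b₂ 1) ∧ b₁ = -e • (b₂ + (2 * b₂ 1) • ![1, 0]) := by
  have hq : b₁ 1 = -(e * b₂ 1) :=
    eq_neg_mul_of_sq_add_two_mul_add_sq_eq_zero (Int.isUnit_sq he)
      (by linear_combination hQ - b₂ 1 * b₁ 1 * hd)
  have hmul : b₂ 1 * (e * b₂ 0 + b₁ 0) = -(2 * e) := by
    simp only [omegaForm] at hd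
    linear_combination -hd + b₂ 0 * hq
  have hs := isUnit_of_isCoprime_of_mul_eq h1 h2 he hq hmul
  refine ⟨hs, ?_⟩
  ext i
  fin_cases i
  · simp [vecHead]
    linear_combination b₂ 1 * hmul - (e * b₂ 0 + b₁ 0) * Int.isUnit_sq hs
  · simp [vecHead, vecTail, hq]

theorem stmt16_general (b₁ b₂ : Fin 2 → ℤ)
    (h1 : IsCoprime (b₁ 0) (b₁ 1)) (h2 : IsCoprime (b₂ 0) (b₂ 1))
    (h1a : b₁ ≠ ![1, 0]) (h1a' : b₁ ≠ -![1, 0])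
    (k : ℤ) (ε : ℤ) (hε : ε = 1 ∨ ε = -1)
    (hprod : ((Tsl b₂ * Tsl b₁ : Matrix.SpecialLinearGroup (Fin 2) ℤ) :
        Matrix (Fin 2) (Fin 2) ℤ) =
      ε • (((Tsl ![1, 0] ^ k : Matrix.SpecialLinearGroup (Fin 2) ℤ) :
        Matrix (Fin 2) (Fin 2) ℤ))) :
    ε = -1 ∧ k = -4 ∧
    (omegaForm ![1, 0] b₂ = 1 ∨ omegaForm ![1, 0] b₂ = -1) ∧
    (b₁ = b₂ + (2 * omegaForm ![1, 0] b₂) • (![1, 0] : Fin 2 → ℤ) ∨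
     b₁ = -(b₂ + (2 * omegaForm ![1, 0] b₂) • (![1, 0] : Fin 2 → ℤ))) := by
  rw [Tsl_one_zero, Matrix.SpecialLinearGroup.coe_mul, ModularGroup.coe_T_zpow] at hprod
  obtain ⟨hd, h01, h10⟩ := relations_of_Tmat_mul_eq_smul hprod
  obtain rfl : ε = -1 := by
    refine hε.resolve_left fun hε1 => ?_
    have hd0 : omegaForm b₂ b₁ = 0 := by subst hε1; simpa using hd
    have hq : b₁ 1 = 0 := by rw [hd0] at h10; nlinarith
    exact (eq_or_eq_neg_of_isCoprime_of_apply_one_eq_zero h1 hq).elim h1a h1a'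
  obtain ⟨e, he, hde⟩ : ∃ e : ℤ, IsUnit e ∧ omegaForm b₂ b₁ = 2 * e := by
    have hd4 : omegaForm b₂ b₁ ^ 2 = 2 ^ 2 := by linear_combination hd
    rcases sq_eq_sq_iff_eq_or_eq_neg.1 hd4 with h | h
    exacts [⟨1, isUnit_one, h⟩, ⟨-1, isUnit_one.neg, h⟩]
  obtain ⟨hs, hb₁⟩ := eq_neg_smul_of_omegaForm_eq_two_mul h1 h2 he hde h10
  have hp : b₁ 0 = -e * (b₂ 0 + 2 * b₂ 1) := by simpa [vecHead] using congrFun hb₁ 0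
  have homega : omegaForm ![1, 0] b₂ = b₂ 1 := by simp [omegaForm]
  refine ⟨rfl, ?_, homega ▸ Int.isUnit_iff.1 hs, ?_⟩
  · rw [hde, hp] at h01
    linear_combination h01 - (4 * b₂ 1 ^ 2 - b₂ 0 ^ 2) * Int.isUnit_sq he - 4 * Int.isUnit_sq hs
  · rw [homega]
    rcases Int.isUnit_iff.1 he with rfl | rfl
    · exact .inr (by simpa using hb₁)
    · exact .inl (by simpa using hb₁)

theorem stmt16 (b₁ b₂ : Fin 2 → ℤ)
    (h1 : IsCoprime (b₁ 0) (b₁ 1)) (h2 : IsCoprime (b₂ 0) (b₂ 1))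
    (h1a : b₁ ≠ ![1, 0]) (h1a' : b₁ ≠ -![1, 0])
    (h2a : b₂ ≠ ![1, 0]) (h2a' : b₂ ≠ -![1, 0])
    (k : ℤ) (ε : ℤ) (hε : ε = 1 ∨ ε = -1)
    (hprod : ((Tsl b₂ * Tsl b₁ : Matrix.SpecialLinearGroup (Fin 2) ℤ) :
        Matrix (Fin 2) (Fin 2) ℤ) =
      ε • (((Tsl ![1, 0] ^ k : Matrix.SpecialLinearGroup (Fin 2) ℤ) :
        Matrix (Fin 2) (Fin 2) ℤ))) :
    ε = -1 ∧ k = -4 ∧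
    (omegaForm ![1, 0] b₂ = 1 ∨ omegaForm ![1, 0] b₂ = -1) ∧
    (b₁ = b₂ + (2 * omegaForm ![1, 0] b₂) • (![1, 0] : Fin 2 → ℤ) ∨
     b₁ = -(b₂ + (2 * omegaForm ![1, 0] b₂) • (![1, 0] : Fin 2 → ℤ))) :=
  stmt16_general b₁ b₂ h1 h2 h1a h1a' k ε hε hprod
end

section
/- Let a = (1,0), b = (0,1) ∈ ℤ², A = T_a, B = T_b. For any integer n and vectors b₄,...,b_ℓ ∈ ℤ², if M denotes the product T_{b_ℓ}⋯T_{b₄} ∘ T_{b+na} ∘ T_b ∘ T_{b+2a}, and M' denotes T_{A⁴(b_ℓ)}⋯T_{A⁴(b₄)} ∘ T_{b+(n+4)a} ∘ T_b ∘ T_{b+2a}, then M' = A⁴ · M · A^{-4}; in particular, M = ε·A^k if and only if M' = ε·A^k. -/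
open Matrix

/-!
The twist is natural under `SL(2, ℤ)`: `T_{g c} = g T_c g⁻¹`. Since `A⁴` moves `b + n a` to
`b + (n + 4) a`, conjugating `M` by `A⁴` gives the factors of `M'`, except that it should also
move the pair `T_b T_{b+2a}`; but that pair equals `-A⁻⁴`, so it commutes with `A⁴`.
Hence `M' = A⁴ M A⁻⁴`, and conjugation by `A⁴` fixes every `ε A^k`.
-/

open scoped MatrixGroups

theorem List.prod_reverse_ofFn_conj {G : Type*} [Group G] (g : G) {m : ℕ} (f : Fin m → G) :
    (List.ofFn fun i => g * f i * g⁻¹).reverse.prod =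
      g * (List.ofFn f).reverse.prod * g⁻¹ := by
  simpa [List.map_reverse, List.map_ofFn, Function.comp_def, MulAut.conj_apply] using
    (map_list_prod (MulAut.conj g) (List.ofFn f).reverse).symm

namespace Matrix.SpecialLinearGroup

variable {n R : Type*} [Fintype n] [DecidableEq n] [CommRing R]

theorem coe_conj_eq_smul_of_commute {g h : SpecialLinearGroup n R} (hgh : Commute g h)
    {x : SpecialLinearGroup n R} {ε : R} (hx : (x : Matrix n n R) = ε • (h : Matrix n n R)) :
    ((g * x * g⁻¹ : SpecialLinearGroup n R) : Matrix n n R) = ε • (h : Matrix n n R) := by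
  rw [coe_mul, coe_mul, hx, mul_smul_comm, smul_mul_assoc, ← coe_mul, ← coe_mul, hgh.eq,
    mul_inv_cancel_right]

theorem coe_conj_eq_smul_iff {g h : SpecialLinearGroup n R} (hgh : Commute g h)
    (x : SpecialLinearGroup n R) (ε : R) :
    ((g * x * g⁻¹ : SpecialLinearGroup n R) : Matrix n n R) = ε • (h : Matrix n n R) ↔
      (x : Matrix n n R) = ε • (h : Matrix n n R) := by
  refine ⟨fun hx => ?_, coe_conj_eq_smul_of_commute hgh⟩
  simpa [mul_assoc] using coe_conj_eq_smul_of_commute hgh.inv_left hx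

end Matrix.SpecialLinearGroup

theorem Tsl_mulVec (g : SL(2, ℤ)) (c : Fin 2 → ℤ) :
    Tsl ((g : Matrix (Fin 2) (Fin 2) ℤ) *ᵥ c) = g * Tsl c * g⁻¹ := by
  have hdet : g 0 0 * g 1 1 - g 0 1 * g 1 0 = 1 := by
    rw [← Matrix.det_fin_two]; exact g.det_coe
  rw [eq_mul_inv_iff_mul_eq]
  ext i j
  simp only [Matrix.SpecialLinearGroup.coe_mul]
  -- entrywise, `T_{gc} g - g T_c = (det g - 1) ω(c, e_j) (g c)_i`
  fin_cases i <;> fin_cases j <;>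
    simp [Tsl, Tmat, Matrix.mulVec, Matrix.mul_apply, dotProduct]
  · linear_combination (-c 1 * (g 0 0 * c 0 + g 0 1 * c 1)) * hdet
  · linear_combination (c 0 * (g 0 0 * c 0 + g 0 1 * c 1)) * hdet
  · linear_combination (-c 1 * (g 1 0 * c 0 + g 1 1 * c 1)) * hdet
  · linear_combination (c 0 * (g 1 0 * c 0 + g 1 1 * c 1)) * hdet

theorem list_prod_reverse_ofFn_Tsl_mulVec (g : SL(2, ℤ)) {m : ℕ} (b : Fin m → Fin 2 → ℤ) :
    (List.ofFn fun i => Tsl ((g : Matrix (Fin 2) (Fin 2) ℤ) *ᵥ b i)).reverse.prod =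
      g * (List.ofFn fun i => Tsl (b i)).reverse.prod * g⁻¹ := by
  simp only [Tsl_mulVec, List.prod_reverse_ofFn_conj]

theorem coe_Tsl_e1_pow (k : ℕ) :
    ((Tsl ![1, 0] ^ k : SL(2, ℤ)) : Matrix (Fin 2) (Fin 2) ℤ) = !![1, (k : ℤ); 0, 1] := by
  induction k with
  | zero => ext i j; fin_cases i <;> fin_cases j <;> rfl
  | succ k ih =>
    rw [pow_succ, Matrix.SpecialLinearGroup.coe_mul, ih]
    ext i j; fin_cases i <;> fin_cases j <;> simp [Tsl, Tmat, Matrix.mul_apply, add_comm]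

theorem Tsl_e1_pow_mulVec (k : ℕ) (n : ℤ) :
    ((Tsl ![1, 0] ^ k : SL(2, ℤ)) : Matrix (Fin 2) (Fin 2) ℤ) *ᵥ (![0, 1] + n • ![1, 0]) =
      ![0, 1] + (n + k) • ![1, 0] := by
  rw [coe_Tsl_e1_pow]
  ext i; fin_cases i <;> simp

theorem Tsl_e2_mul_Tsl_e2_add_two_e1 :
    Tsl ![0, 1] * Tsl (![0, 1] + (2 : ℤ) • ![1, 0]) = -(Tsl ![1, 0] ^ 4)⁻¹ := by
  rw [← inv_neg, eq_inv_iff_mul_eq_one]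
  ext i j
  simp only [Matrix.SpecialLinearGroup.coe_mul, Matrix.SpecialLinearGroup.coe_neg,
    Matrix.SpecialLinearGroup.coe_pow]
  fin_cases i <;> fin_cases j <;> simp [Tsl, Tmat, Matrix.mul_apply, pow_succ]

theorem commute_Tsl_e1_pow_four_Tsl_e2_mul_Tsl_e2_add_two_e1 :
    Commute (Tsl ![1, 0] ^ 4) (Tsl ![0, 1] * Tsl (![0, 1] + (2 : ℤ) • ![1, 0])) := by
  rw [Tsl_e2_mul_Tsl_e2_add_two_e1]
  exact ((Commute.refl _).inv_right).neg_right

theorem stmt17 (n : ℤ) (m : ℕ) (b : Fin m → Fin 2 → ℤ) :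
    let a : Fin 2 → ℤ := ![1, 0]
    let bb : Fin 2 → ℤ := ![0, 1]
    let A := Tsl a
    let M := (List.ofFn fun i : Fin m => Tsl (b i)).reverse.prod *
      (Tsl (bb + n • a) * Tsl bb * Tsl (bb + (2 : ℤ) • a))
    let M' := (List.ofFn fun i : Fin m =>
        Tsl (((A ^ 4 : Matrix.SpecialLinearGroup (Fin 2) ℤ) :
          Matrix (Fin 2) (Fin 2) ℤ).mulVec (b i))).reverse.prod *
      (Tsl (bb + (n + 4) • a) * Tsl bb * Tsl (bb + (2 : ℤ) • a))
    M' = A ^ 4 * M * A ^ (-4 : ℤ) ∧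
    ∀ (ε k : ℤ),
      ((M : Matrix (Fin 2) (Fin 2) ℤ) =
          ε • ((A ^ k : Matrix.SpecialLinearGroup (Fin 2) ℤ) :
            Matrix (Fin 2) (Fin 2) ℤ) ↔
        (M' : Matrix (Fin 2) (Fin 2) ℤ) =
          ε • ((A ^ k : Matrix.SpecialLinearGroup (Fin 2) ℤ) :
            Matrix (Fin 2) (Fin 2) ℤ)) := by
  intro a bb A M M'
  have hconj : M' = A ^ 4 * M * (A ^ 4)⁻¹ := by
    have hT : Tsl (bb + (n + 4) • a) = A ^ 4 * Tsl (bb + n • a) * (A ^ 4)⁻¹ := by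
      rw [← Tsl_mulVec, Tsl_e1_pow_mulVec]; rfl
    have hW : A ^ 4 * (Tsl bb * Tsl (bb + (2 : ℤ) • a)) * (A ^ 4)⁻¹ =
        Tsl bb * Tsl (bb + (2 : ℤ) • a) :=
      mul_inv_eq_of_eq_mul commute_Tsl_e1_pow_four_Tsl_e2_mul_Tsl_e2_add_two_e1.eq
    simp only [M, M']
    rw [list_prod_reverse_ofFn_Tsl_mulVec, hT, mul_assoc _ (Tsl bb), ← hW]
    group
  refine ⟨by rw [hconj, _root_.zpow_neg, zpow_ofNat], fun ε k => ?_⟩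
  rw [hconj, Matrix.SpecialLinearGroup.coe_conj_eq_smul_iff
    (((Commute.refl A).pow_left 4).zpow_right k)]
end
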